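/- Let r, s be natural numbers with r + s ≥ 1 and suppose the volume element ω of Cl(r,s) satisfies ω² = -1 (for example, (r,s) = (3,1)). Let P : Cl(r,s) → Cl(r,s) be an ℝ-linear map satisfying (i) P ∘ P = P, (ii) P(x*y) = x * P(y) for all x, y ∈ Cl(r,s), and (iii) P(map f x) = map f (P x) for every special isometry equivalence f of Q_{r,s}. Then P = 0 or P = id. -/

import Mathlib

/-!
A projection with `P (x * y) = x * P y` is right multiplication by the idempotent `a = P 1`.
Let `e_T` be the blades of `Cl(r,s)`: they span it and there are `2 ^ (r + s)` of them, the
dimension of `Cl(r,s)` (via the exterior algebra), so they form a basis. The reflection in two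
coordinate axes `i ≠ j` has determinant `1` and multiplies `e_T` by `(-1) ^ |T ∩ {i, j}|`;
taking `i ∈ T`, `j ∉ T` shows that an invariant element has no component along `e_T` unless
`T = ∅` or `T` is everything, i.e. `a = α + β ω`. As `ω² = -1`, the span of `1` and `ω` is a copy
of `ℂ`, whose only idempotents are `0` and `1`.
-/

open CliffordAlgebra QuadraticMap
open scoped symmDiff

/-- The quadratic form `Q_{r,s}` on `ℝ^{r+s}`:
`Q(x) = -(x_0² + ⋯ + x_{r-1}²) + (x_r² + ⋯ + x_{r+s-1}²)`. -/
noncomputable def Qrs (r s : ℕ) : QuadraticForm ℝ (Fin (r + s) → ℝ) :=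
  QuadraticMap.weightedSumSquares ℝ
    (fun i : Fin (r + s) => if (i : ℕ) < r then (-1 : ℝ) else 1)

/-- The volume element `ω = ι(e_0) * ι(e_1) * ⋯ * ι(e_{r+s-1})` of `Cl(r,s)`. -/
noncomputable def volumeElt (r s : ℕ) : CliffordAlgebra (Qrs r s) :=
  (List.ofFn (fun i : Fin (r + s) => ι (Qrs r s) (Pi.single i 1))).prod

/-- An isometry equivalence of `Q_{r,s}` is special if its determinant is `1`. -/
noncomputable def IsSpecial {r s : ℕ} (f : (Qrs r s).IsometryEquiv (Qrs r s)) : Prop :=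
  LinearEquiv.det f.toLinearEquiv = 1

theorem CliffordAlgebra.finrank_eq_card_finset {K M ι : Type*} [Field K] [Invertible (2 : K)]
    [AddCommGroup M] [Module K M] [LinearOrder ι] [Fintype ι] (Q : QuadraticForm K M)
    (b : Module.Basis ι K M) :
    Module.finrank K (CliffordAlgebra Q) = Fintype.card (Finset ι) := by
  rw [(equivExterior Q).finrank_eq, Module.finrank_eq_card_basis b.ExteriorAlgebra]

theorem Module.Basis.repr_apply_of_forall_apply_eq_smul {ι R M : Type*} [CommSemiring R]
    [AddCommMonoid M] [Module R M] (b : Module.Basis ι R M) {f : M →ₗ[R] M} {c : ι → R}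
    (hf : ∀ i, f (b i) = c i • b i) (x : M) (i : ι) : b.repr (f x) i = c i * b.repr x i := by
  have : (b.coord i).comp f = c i • b.coord i := b.ext fun j => by
    by_cases hij : j = i
    · subst hij; simp [hf]
    · simp [hf, Ne.symm hij]
  exact LinearMap.congr_fun this x

theorem IsIdempotentElem.eq_zero_or_eq_one_of_sq_eq_neg_one {A : Type*} [Ring A] [Algebra ℝ A]
    {ω : A} (hω : ω ^ 2 = -1) (hind : LinearIndependent ℝ ![1, ω]) {α β : ℝ}
    (h : IsIdempotentElem (α • 1 + β • ω)) : α • 1 + β • ω = 0 ∨ α • 1 + β • ω = 1 := by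
  have hsq : (α • 1 + β • ω) * (α • 1 + β • ω) = (α ^ 2 - β ^ 2) • 1 + (2 * α * β) • ω := by
    rw [pow_two] at hω
    simp only [add_mul, mul_add, smul_mul_smul_comm, one_mul, mul_one, hω]
    module
  obtain ⟨h1, h2⟩ := LinearIndependent.pair_iff.mp hind (α ^ 2 - β ^ 2 - α) (2 * α * β - β) <| by
    rw [IsIdempotentElem, hsq] at h
    linear_combination (norm := module) h
  obtain rfl : β = 0 := by
    rcases mul_eq_zero.mp (show β * (2 * α - 1) = 0 by linear_combination h2) with hβ | hα
    · exact hβ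
    · exfalso; nlinarith [sq_nonneg β]
  rcases mul_eq_zero.mp (show α * (α - 1) = 0 by linear_combination h1) with rfl | hα
  · left; simp
  · right; simp [sub_eq_zero.mp hα]

namespace CliffordAlgebra.WeightedSumSquares

section CommRing

variable {R : Type*} [CommRing R] {n : ℕ} (w : Fin n → R)

noncomputable abbrev generator (i : Fin n) : CliffordAlgebra (weightedSumSquares R w) :=
  ι _ (Pi.single i 1)

noncomputable def bladeOn (l : List (Fin n)) (T : Finset (Fin n)) :
    CliffordAlgebra (weightedSumSquares R w) :=
  (l.map fun j => if j ∈ T then generator w j else 1).prod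

noncomputable def blade (T : Finset (Fin n)) : CliffordAlgebra (weightedSumSquares R w) :=
  bladeOn w (List.finRange n) T

variable {w}

lemma weightedSumSquares_single (i : Fin n) : weightedSumSquares R w (Pi.single i 1) = w i := by
  rw [weightedSumSquares_apply, Finset.sum_eq_single i] <;> simp +contextual

lemma polar_weightedSumSquares_single {i j : Fin n} (hij : i ≠ j) :
    polar (weightedSumSquares R w) (Pi.single i 1) (Pi.single j 1) = 0 := by
  simp only [polar, weightedSumSquares_apply, ← Finset.sum_sub_distrib]
  refine Finset.sum_eq_zero fun k _ => ?_
  by_cases hki : k = i <;> by_cases hkj : k = j <;> simp_all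

lemma generator_mul_self (i : Fin n) :
    generator w i * generator w i = algebraMap R _ (w i) := by
  rw [ι_sq_scalar, weightedSumSquares_single]

lemma generator_mul_generator_of_ne {i j : Fin n} (hij : i ≠ j) :
    generator w i * generator w j = -(generator w j * generator w i) := by
  rw [eq_neg_iff_add_eq_zero, ι_mul_ι_add_swap, polar_weightedSumSquares_single hij, map_zero]

lemma bladeOn_congr {l : List (Fin n)} {T T' : Finset (Fin n)} (h : ∀ k ∈ l, k ∈ T ↔ k ∈ T') :
    bladeOn w l T = bladeOn w l T' := by
  unfold bladeOn
  congr 1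
  exact List.map_congr_left fun k hk => by simp only [h k hk]

lemma bladeOn_cons (j : Fin n) (l : List (Fin n)) (T : Finset (Fin n)) :
    bladeOn w (j :: l) T = (if j ∈ T then generator w j else 1) * bladeOn w l T := by
  simp [bladeOn]

lemma generator_mul_bladeOn {i : Fin n} {T : Finset (Fin n)} :
    ∀ {l : List (Fin n)}, l.Nodup → i ∈ l →
      ∃ c : R, generator w i * bladeOn w l T = c • bladeOn w l (T ∆ {i})
  | j :: l, hl, hi => by
    obtain ⟨hjl, hl⟩ := List.nodup_cons.mp hl
    rw [bladeOn_cons, bladeOn_cons]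
    by_cases hji : j = i
    · subst hji
      have hrest : bladeOn w l (T ∆ {j}) = bladeOn w l T :=
        bladeOn_congr fun k hk => by
          have : k ≠ j := fun h => hjl (h ▸ hk)
          simp [Finset.mem_symmDiff, this]
      by_cases hjT : j ∈ T
      · refine ⟨w j, ?_⟩
        simp only [hjT, ↓reduceIte, Finset.mem_symmDiff, Finset.mem_singleton, not_true, and_false,
          or_false, one_mul, hrest]
        rw [← mul_assoc, generator_mul_self, ← Algebra.smul_def]
      · refine ⟨1, ?_⟩
        simp [hjT, Finset.mem_symmDiff, hrest]
    · obtain ⟨c, hc⟩ := generator_mul_bladeOn (T := T) hl (List.mem_of_ne_of_mem (Ne.symm hji) hi)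
      have hjT : j ∈ T ∆ {i} ↔ j ∈ T := by simp [Finset.mem_symmDiff, hji]
      refine ⟨if j ∈ T then -c else c, ?_⟩
      simp only [hjT]
      split_ifs
      · rw [← mul_assoc, generator_mul_generator_of_ne (Ne.symm hji), neg_mul, mul_assoc, hc,
          mul_smul_comm, neg_smul]
      · rw [one_mul, one_mul, hc]

lemma generator_mul_blade (i : Fin n) (T : Finset (Fin n)) :
    ∃ c : R, generator w i * blade w T = c • blade w (T ∆ {i}) :=
  generator_mul_bladeOn (List.nodup_finRange n) (List.mem_finRange i)

lemma blade_empty : blade w ∅ = 1 := by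
  simp [blade, bladeOn]

lemma span_blade_eq_top : Submodule.span R (Set.range (blade w)) = ⊤ := by
  set S := Submodule.span R (Set.range (blade w))
  suffices h : ∀ x, ∀ t ∈ S, x * t ∈ S from
    eq_top_iff.mpr fun x _ => by
      simpa using h x 1 (blade_empty (w := w) ▸ Submodule.subset_span ⟨∅, rfl⟩)
  intro x
  induction x using CliffordAlgebra.induction with
  | algebraMap c => exact fun t ht => by simpa [Algebra.smul_def] using S.smul_mem c ht
  | ι v =>
    intro t ht
    rw [← (Pi.basisFun R (Fin n)).sum_repr v, map_sum, Finset.sum_mul]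
    refine S.sum_mem fun i _ => ?_
    rw [map_smul, smul_mul_assoc, Pi.basisFun_apply]
    refine S.smul_mem _ ?_
    induction ht using Submodule.span_induction with
    | mem x hx =>
      obtain ⟨T, rfl⟩ := hx
      obtain ⟨c, hc⟩ := generator_mul_blade (w := w) i T
      exact hc ▸ S.smul_mem c (Submodule.subset_span ⟨_, rfl⟩)
    | zero => simp
    | add x y _ _ hx hy => rw [mul_add]; exact S.add_mem hx hy
    | smul c x _ hx => rw [mul_smul_comm]; exact S.smul_mem c hx
  | mul a b ha hb => exact fun t ht => mul_assoc a b t ▸ ha _ (hb t ht)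
  | add a b ha hb => exact fun t ht => (add_mul a b t).symm ▸ S.add_mem (ha t ht) (hb t ht)

def coordSign (F : Finset (Fin n)) (k : Fin n) : R := if k ∈ F then -1 else 1

lemma coordSign_mul_self (F : Finset (Fin n)) (k : Fin n) :
    coordSign F k * coordSign F k = (1 : R) := by
  unfold coordSign; split_ifs <;> simp

noncomputable def coordReflection (F : Finset (Fin n)) : (Fin n → R) ≃ₗ[R] (Fin n → R) :=
  LinearEquiv.ofInvolutive (Matrix.toLin' (Matrix.diagonal (coordSign F)))
    fun x => by ext k; simp [Matrix.mulVec_diagonal, ← mul_assoc, coordSign_mul_self]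

lemma coordReflection_apply (F : Finset (Fin n)) (x : Fin n → R) (k : Fin n) :
    coordReflection F x k = coordSign F k * x k := by
  change Matrix.toLin' _ x k = _
  rw [Matrix.toLin'_apply, Matrix.mulVec_diagonal]

lemma det_coordReflection (F : Finset (Fin n)) :
    LinearEquiv.det (coordReflection (R := R) F) = (-1) ^ F.card := by
  ext
  rw [LinearEquiv.coe_det]
  change LinearMap.det (Matrix.toLin' (Matrix.diagonal (coordSign F) : Matrix _ _ R)) = _
  simp only [LinearMap.det_toLin', Matrix.det_diagonal, coordSign]
  rw [Finset.prod_ite_mem, Finset.univ_inter, Finset.prod_const]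
  simp

variable (w) in
noncomputable def reflectCoords (F : Finset (Fin n)) :
    (weightedSumSquares R w).IsometryEquiv (weightedSumSquares R w) where
  toLinearEquiv := coordReflection F
  map_app' x := by
    simp only [weightedSumSquares_apply]
    refine Finset.sum_congr rfl fun k _ => ?_
    simp only [LinearMap.toFun_eq_coe, LinearEquiv.coe_coe, coordReflection_apply, smul_eq_mul]
    linear_combination w k * x k * x k * coordSign_mul_self (R := R) F k

lemma map_reflectCoords_generator (F : Finset (Fin n)) (k : Fin n) :
    map (reflectCoords w F).toIsometry (generator w k) = (coordSign F k : R) • generator w k := by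
  rw [map_apply_ι, ← map_smul]
  congr 1
  ext m
  change coordReflection F (Pi.single k 1) m = _
  rw [coordReflection_apply]
  by_cases hmk : m = k
  · subst hmk; simp
  · simp [hmk]

lemma map_reflectCoords_bladeOn (F : Finset (Fin n)) (l : List (Fin n)) (T : Finset (Fin n)) :
    map (reflectCoords w F).toIsometry (bladeOn w l T) =
      (l.map fun j => if j ∈ T then (coordSign F j : R) else 1).prod • bladeOn w l T := by
  induction l with
  | nil => simp [bladeOn]
  | cons j l ih =>
    rw [bladeOn_cons, map_mul, ih, List.map_cons, List.prod_cons]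
    split_ifs
    · rw [map_reflectCoords_generator, smul_mul_smul_comm]
    · rw [map_one, one_mul, one_mul, one_mul]

lemma map_reflectCoords_blade (F T : Finset (Fin n)) :
    map (reflectCoords w F).toIsometry (blade w T) = (-1 : R) ^ (T ∩ F).card • blade w T := by
  rw [blade, map_reflectCoords_bladeOn, ← Fin.prod_univ_def, Finset.prod_ite_mem,
    Finset.univ_inter]
  simp only [coordSign]
  rw [Finset.prod_ite_mem, Finset.prod_const]

end CommRing

section Field

variable {K : Type*} [Field K] [CharZero K] {n : ℕ} {w : Fin n → K}

variable (w) in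
noncomputable def bladeBasis :
    Module.Basis (Finset (Fin n)) K (CliffordAlgebra (weightedSumSquares K w)) :=
  basisOfTopLeSpanOfCardEqFinrank (blade w) span_blade_eq_top.ge
    (finrank_eq_card_finset _ (Pi.basisFun K (Fin n))).symm

@[simp] lemma coe_bladeBasis : ⇑(bladeBasis w) = blade w :=
  coe_basisOfTopLeSpanOfCardEqFinrank ..

lemma linearIndependent_one_blade_univ [NeZero n] :
    LinearIndependent K ![1, blade w Finset.univ] := by
  have hne : (∅ : Finset (Fin n)) ≠ Finset.univ := Finset.univ_nonempty.ne_empty.symm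
  rw [LinearIndependent.pair_iff]
  intro α β h
  have h' := congr_arg (fun x => ((bladeBasis w).repr x ∅, (bladeBasis w).repr x Finset.univ)) h
  simpa [← blade_empty (w := w), ← coe_bladeBasis, Finsupp.single_apply, hne, hne.symm]
    using h'

lemma exists_eq_smul_one_add_smul_blade_univ_of_map_reflectCoords_pair_eq [NeZero n]
    {x : CliffordAlgebra (weightedSumSquares K w)}
    (hx : ∀ i j : Fin n, i ≠ j → map (reflectCoords w {i, j}).toIsometry x = x) :
    ∃ α β : K, x = α • 1 + β • blade w Finset.univ := by
  set b := bladeBasis w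
  have hne : (∅ : Finset (Fin n)) ≠ Finset.univ := Finset.univ_nonempty.ne_empty.symm
  have hcoeff : ∀ T, T ≠ ∅ → T ≠ Finset.univ → b.repr x T = 0 := by
    intro T hT hT'
    obtain ⟨i, hi⟩ := Finset.nonempty_iff_ne_empty.2 hT
    obtain ⟨j, hj⟩ : ∃ j, j ∉ T := by simpa [Finset.eq_univ_iff_forall] using hT'
    have hij : i ≠ j := fun h => hj (h ▸ hi)
    have h := b.repr_apply_of_forall_apply_eq_smul
      (f := (map (reflectCoords w {i, j}).toIsometry).toLinearMap)
      (fun U => by simp only [b, coe_bladeBasis, AlgHom.toLinearMap_apply]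
                   exact map_reflectCoords_blade _ _) x T
    rw [AlgHom.toLinearMap_apply, hx i j hij, Finset.inter_insert_of_mem hi,
      Finset.inter_singleton_of_notMem hj] at h
    exact self_eq_neg.mp (by simpa using h)
  refine ⟨b.repr x ∅, b.repr x Finset.univ, ?_⟩
  conv_lhs => rw [← b.sum_repr x]
  rw [Fintype.sum_eq_add ∅ Finset.univ hne
    fun T hT => by rw [hcoeff T hT.1 hT.2, zero_smul]]
  simp [b, blade_empty]

end Field

end CliffordAlgebra.WeightedSumSquares

open CliffordAlgebra.WeightedSumSquares

-- `Qrs r s` unfolds to `weightedSumSquares ℝ (signatureWeights r s)`, so the results above apply.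
def signatureWeights (r s : ℕ) (i : Fin (r + s)) : ℝ := if (i : ℕ) < r then -1 else 1

lemma blade_signatureWeights_univ (r s : ℕ) :
    blade (signatureWeights r s) Finset.univ = volumeElt r s := by
  simp only [blade, bladeOn, Finset.mem_univ, ↓reduceIte, volumeElt, List.ofFn_eq_map]
  rfl

lemma isSpecial_reflectCoords_pair {r s : ℕ} {i j : Fin (r + s)} (hij : i ≠ j) :
    IsSpecial (reflectCoords (signatureWeights r s) {i, j}) := by
  unfold IsSpecial
  exact (det_coordReflection _).trans (by rw [Finset.card_pair hij]; norm_num)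

/-- When `ω² = -1`, the only `SO(r,s)`-equivariant projections of `Cl(r,s)`
onto a submodule are `0` and the identity. -/
theorem equivariant_projection_eq_zero_or_id (r s : ℕ) (hrs : 1 ≤ r + s)
    (hω : volumeElt r s ^ 2 = -1)
    (P : CliffordAlgebra (Qrs r s) →ₗ[ℝ] CliffordAlgebra (Qrs r s))
    (h1 : ∀ x, P (P x) = P x)
    (h2 : ∀ x y, P (x * y) = x * P y)
    (h3 : ∀ f : (Qrs r s).IsometryEquiv (Qrs r s), IsSpecial f →
      ∀ x, P (CliffordAlgebra.map f.toIsometry x) =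
        CliffordAlgebra.map f.toIsometry (P x)) :
    P = 0 ∨ P = LinearMap.id := by
  have : NeZero (r + s) := ⟨by omega⟩
  have hP : ∀ x, P x = x * P 1 := fun x => by rw [← h2, mul_one]
  have hidem : IsIdempotentElem (P 1) := by rw [IsIdempotentElem, ← hP, h1]
  obtain ⟨α, β, hαβ⟩ : ∃ α β : ℝ, P 1 = α • 1 + β • volumeElt r s := by
    rw [← blade_signatureWeights_univ]
    refine exists_eq_smul_one_add_smul_blade_univ_of_map_reflectCoords_pair_eq fun i j hij => ?_
    have hfix := (h3 _ (isSpecial_reflectCoords_pair hij) 1).symm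
    rw [map_one (map _)] at hfix
    exact hfix
  have hind : LinearIndependent ℝ ![1, volumeElt r s] :=
    blade_signatureWeights_univ r s ▸ linearIndependent_one_blade_univ
  rcases (hαβ ▸ hidem).eq_zero_or_eq_one_of_sq_eq_neg_one hω hind with h | h
  · left; ext x; rw [hP, hαβ, h, mul_zero]; rfl
  · right; ext x; rw [hP, hαβ, h, mul_one]; rfl
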